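/- arXiv:math/0611763 — 6 statements merged into one kernel-verified Lean document; each statement's English description precedes it below -/
import Mathlib

section
/- For the matrix M_1 = [[1,1,1],[0,1,0],[1,1,0]], the (1,1)-entry of M_1^{n-1} equals the Fibonacci-type expression (μ^n - (1-μ)^n)/√5, where μ = (1+√5)/2. Equivalently, (M_1^{n-1})_{11} = F_n, the n-th Fibonacci number. -/
/-!
Since `M₁ 1 0 = M₁ 1 2 = 0`, the entries `0` and `2` of row `0` of `M₁ ^ k` evolve, as `k` grows,
by the Fibonacci matrix `!![1,1;1,0]`, independently of the middle entry. Binet's formula then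
gives the closed form.
-/

open Matrix Real

theorem pow_M1_apply_zero_zero_and_zero_two (k : ℕ) :
    ((!![1,1,1;0,1,0;1,1,0] : Matrix (Fin 3) (Fin 3) ℤ) ^ k) 0 0 = Nat.fib (k + 1) ∧
    ((!![1,1,1;0,1,0;1,1,0] : Matrix (Fin 3) (Fin 3) ℤ) ^ k) 0 2 = Nat.fib k := by
  induction k with
  | zero => simp [one_apply]
  | succ k ih =>
    obtain ⟨h00, h02⟩ := ih
    simp only [pow_succ, mul_apply, Fin.sum_univ_three, h00, h02]
    simp [Nat.fib_add_two, add_comm (Nat.fib k : ℤ)]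

/-- The `(1,1)` entry of `M₁^(n-1)` is the `n`-th Fibonacci number, equal to
`(μⁿ - (1-μ)ⁿ)/√5` with `μ = (1+√5)/2`. -/
theorem M1_pow_entry_fib (M₁ : Matrix (Fin 3) (Fin 3) ℤ)
    (hM₁ : M₁ = !![1,1,1;0,1,0;1,1,0]) :
    ∀ n : ℕ, 1 ≤ n →
      (((M₁ ^ (n - 1)) 0 0 : ℤ) : ℝ) =
        (((1 + Real.sqrt 5) / 2) ^ n - (1 - (1 + Real.sqrt 5) / 2) ^ n) /
          Real.sqrt 5 ∧
      (M₁ ^ (n - 1)) 0 0 = Nat.fib n := by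
  intro n hn
  have hfib : (M₁ ^ (n - 1)) 0 0 = Nat.fib n := by
    rw [hM₁, (pow_M1_apply_zero_zero_and_zero_two (n - 1)).1, Nat.sub_add_cancel hn]
  refine ⟨?_, hfib⟩
  rw [hfib, Int.cast_natCast, coe_fib_eq, ← one_sub_goldenConj]
end

section
/- The sum of all entries of M_1^{n-1}, where M_1 = [[1,1,1],[0,1,0],[1,1,0]], equals -2 + ((15+7√5)/10) μ^n + ((15-7√5)/10) (1-μ)^n, with μ = (1+√5)/2. -/
/-- The sum of all entries of `M₁^(n-1)` is
`-2 + ((15+7√5)/10) μⁿ + ((15-7√5)/10)(1-μ)ⁿ` with `μ = (1+√5)/2`. -/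
theorem M1_sum_entries (M₁ : Matrix (Fin 3) (Fin 3) ℝ)
    (hM₁ : M₁ = !![1,1,1;0,1,0;1,1,0]) (μ : ℝ) (hμ : μ = (1 + Real.sqrt 5) / 2) :
    ∀ n : ℕ, 1 ≤ n →
      ∑ i, ∑ j, (M₁ ^ (n - 1)) i j =
        -2 + (15 + 7 * Real.sqrt 5) / 10 * μ ^ n
          + (15 - 7 * Real.sqrt 5) / 10 * (1 - μ) ^ n := by
  have h5 : Real.sqrt 5 ^ 2 = 5 := Real.sq_sqrt (by norm_num)
  set r : ℝ := Real.sqrt 5 with hr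
  have hμ2 : μ ^ 2 = μ + 1 := by rw [hμ]; nlinarith [h5]
  have hν2 : (1 - μ) ^ 2 = (1 - μ) + 1 := by rw [hμ]; nlinarith [h5]
  have hμ3 : μ ^ 3 = 2 * μ ^ 2 - 1 := by nlinarith [hμ2]
  have hν3 : (1 - μ) ^ 3 = 2 * (1 - μ) ^ 2 - 1 := by nlinarith [hν2]
  have hcube : M₁ ^ 3 = M₁ ^ 2 + M₁ ^ 2 - 1 := by
    subst hM₁
    ext i j
    fin_cases i <;> fin_cases j <;>
      simp [pow_succ, Matrix.mul_apply, Fin.sum_univ_succ, Matrix.one_apply] <;> norm_num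
  have hsrec : ∀ m : ℕ, (∑ i, ∑ j, (M₁ ^ (m + 3)) i j)
      = 2 * (∑ i, ∑ j, (M₁ ^ (m + 2)) i j) - (∑ i, ∑ j, (M₁ ^ m) i j) := by
    intro m
    have hpow : M₁ ^ (m + 3) = M₁ ^ (m + 2) + M₁ ^ (m + 2) - M₁ ^ m := by
      have h1 : M₁ ^ (m + 3) = M₁ ^ m * M₁ ^ 3 := by rw [← pow_add]
      have h2 : M₁ ^ (m + 2) = M₁ ^ m * M₁ ^ 2 := by rw [← pow_add]
      rw [h1, hcube, h2]
      rw [Matrix.mul_sub, Matrix.mul_add, Matrix.mul_one]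
    rw [hpow]
    simp [Matrix.sub_apply, Matrix.add_apply, Finset.sum_sub_distrib, Finset.sum_add_distrib]
    ring
  have hμrec : ∀ m : ℕ, μ ^ (m + 4) = 2 * μ ^ (m + 3) - μ ^ (m + 1) := by
    intro m
    calc μ ^ (m + 4) = μ ^ (m + 1) * μ ^ 3 := by ring
      _ = μ ^ (m + 1) * (2 * μ ^ 2 - 1) := by rw [hμ3]
      _ = 2 * μ ^ (m + 3) - μ ^ (m + 1) := by ring
  have hνrec : ∀ m : ℕ, (1 - μ) ^ (m + 4) = 2 * (1 - μ) ^ (m + 3) - (1 - μ) ^ (m + 1) := by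
    intro m
    calc (1 - μ) ^ (m + 4) = (1 - μ) ^ (m + 1) * (1 - μ) ^ 3 := by ring
      _ = (1 - μ) ^ (m + 1) * (2 * (1 - μ) ^ 2 - 1) := by rw [hν3]
      _ = 2 * (1 - μ) ^ (m + 3) - (1 - μ) ^ (m + 1) := by ring
  -- closed form for every m
  have key : ∀ m : ℕ, (∑ i, ∑ j, (M₁ ^ m) i j)
      = -2 + (15 + 7 * r) / 10 * μ ^ (m + 1) + (15 - 7 * r) / 10 * (1 - μ) ^ (m + 1) := by
    have b0 : (∑ i, ∑ j, (M₁ ^ 0) i j)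
        = -2 + (15 + 7 * r) / 10 * μ ^ 1 + (15 - 7 * r) / 10 * (1 - μ) ^ 1 := by
      subst hM₁
      simp [Matrix.one_apply, Fin.sum_univ_succ]
      rw [hμ, hr]
      nlinarith [h5]
    have b1 : (∑ i, ∑ j, (M₁ ^ 1) i j)
        = -2 + (15 + 7 * r) / 10 * μ ^ 2 + (15 - 7 * r) / 10 * (1 - μ) ^ 2 := by
      subst hM₁
      simp [Fin.sum_univ_succ]
      rw [hμ, hr]
      nlinarith [h5]
    have b2 : (∑ i, ∑ j, (M₁ ^ 2) i j)
        = -2 + (15 + 7 * r) / 10 * μ ^ 3 + (15 - 7 * r) / 10 * (1 - μ) ^ 3 := by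
      subst hM₁
      simp [pow_succ, Matrix.mul_apply, Fin.sum_univ_succ]
      rw [hμ, hr]
      nlinarith [h5]
    have main : ∀ m : ℕ,
        ((∑ i, ∑ j, (M₁ ^ m) i j)
          = -2 + (15 + 7 * r) / 10 * μ ^ (m + 1) + (15 - 7 * r) / 10 * (1 - μ) ^ (m + 1))
        ∧ ((∑ i, ∑ j, (M₁ ^ (m + 1)) i j)
          = -2 + (15 + 7 * r) / 10 * μ ^ (m + 2) + (15 - 7 * r) / 10 * (1 - μ) ^ (m + 2))
        ∧ ((∑ i, ∑ j, (M₁ ^ (m + 2)) i j)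
          = -2 + (15 + 7 * r) / 10 * μ ^ (m + 3) + (15 - 7 * r) / 10 * (1 - μ) ^ (m + 3)) := by
      intro m
      induction m with
      | zero => exact ⟨b0, b1, b2⟩
      | succ k ih =>
        refine ⟨ih.2.1, ih.2.2, ?_⟩
        have h1 : k + 1 + 2 = k + 3 := by ring
        have h2 : k + 1 + 3 = k + 4 := by ring
        rw [h1, h2, hsrec k, ih.1, ih.2.2, hμrec k, hνrec k]
        ring
    exact fun m => (main m).1
  intro n hn
  obtain ⟨m, rfl⟩ : ∃ m, n = m + 1 := ⟨n - 1, (Nat.succ_pred_eq_of_pos hn).symm⟩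
  simpa using key m
end

section
/- For every n ≥ 1, the sum of all entries of M_2^{n-1} equals 2n + 1, where M_2 = [[0,1,0],[0,1,0],[1,1,1]] (for n=1 interpret M_2^0 = I, sum 3). -/
lemma M2_pow (k : ℕ) :
    (!![0,1,0;0,1,0;1,1,1] : Matrix (Fin 3) (Fin 3) ℤ) ^ (k + 1)
      = !![0,1,0;0,1,0;1,2*(k:ℤ)+1,1] := by
  induction k with
  | zero => simp
  | succ m ih =>
      rw [pow_succ, ih]
      ext i j
      fin_cases i <;> fin_cases j <;>
        simp [Matrix.mul_apply, Fin.sum_univ_three] <;> ring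

/-- For every `n ≥ 1`, the sum of all entries of `M₂^(n-1)` equals `2n+1`. -/
theorem M2_sum_entries (M₂ : Matrix (Fin 3) (Fin 3) ℤ)
    (hM₂ : M₂ = !![0,1,0;0,1,0;1,1,1]) :
    ∀ n : ℕ, 1 ≤ n →
      ∑ i, ∑ j, (M₂ ^ (n - 1)) i j = 2 * (n : ℤ) + 1 := by
  rintro n hn
  obtain ⟨m, rfl⟩ := Nat.exists_eq_add_of_le hn
  subst hM₂
  cases m with
  | zero => simp [Fin.sum_univ_three]
  | succ k =>
      have h : 1 + (k + 1) - 1 = k + 1 := by omega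
      rw [h, M2_pow]
      simp [Fin.sum_univ_three]
      push_cast
      ring
end

section
/- Let M_1 = [[1,1,1],[0,1,0],[1,1,0]], M_2 = [[0,1,0],[0,1,0],[1,1,1]], and let s_1,...,s_{2t} be positive integers with s_1 ≥ 2. Then the sum of all entries of the product M_1^{s_1-1} M_2^{s_2} M_1^{s_3} M_2^{s_4} ⋯ M_1^{s_{2t-1}} M_2^{s_{2t}} is strictly greater than 5^{-t/2} ∏_{i=1}^t (μ^{s_{2i-1}} - (1-μ)^{s_{2i-1}}), where μ = (1+√5)/2. -/
/-!
Write `aᵢ` for the exponent of `M₁` in the `i`-th factor. We have `(M₁ ^ a)₀₂ = F_a`, and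
`(M₂ ^ b)₂ⱼ ≥ 1` for `j = 0, 1` when `b ≥ 1`; as all matrices involved are nonnegative, each
factor multiplies the `(0, 0)` and `(0, 1)` entries of the partial product by at least `F_{aᵢ}`,
while row 1 stays `e₁` throughout. Hence the entry sum is at least `2 ∏ F_{aᵢ} + 1`, and
`2 F_{s₁ - 1} ≥ F_{s₁}`. By Binet's formula the left-hand side of the claim is `∏ F_{s_{2i+1}}`.
-/

open Finset Matrix

namespace Matrix

variable {n R : Type*} [Fintype n] [DecidableEq n] [Semiring R]

section Nonneg

variable [PartialOrder R] [IsOrderedRing R]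

variable (n R) in
def nonnegSubmonoid : Submonoid (Matrix n n R) where
  carrier := {M | ∀ i j, 0 ≤ M i j}
  mul_mem' {X Y} hX hY i j := sum_nonneg fun k _ => mul_nonneg (hX i k) (hY k j)
  one_mem' i j := by by_cases h : i = j <;> simp [one_apply, h]

lemma apply_mul_apply_le_mul_apply {X Y : Matrix n n R} (hX : X ∈ nonnegSubmonoid n R)
    (hY : Y ∈ nonnegSubmonoid n R) (i k j : n) : X i k * Y k j ≤ (X * Y) i j :=
  single_le_sum (fun l _ => mul_nonneg (hX i l) (hY l j)) (mem_univ k)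

end Nonneg

def rowFixingSubmonoid (i : n) : Submonoid (Matrix n n R) where
  carrier := {M | M i = Pi.single i 1}
  mul_mem' {X Y} hX hY := by
    rw [Set.mem_ofPred_eq, mul_apply_eq_vecMul, hX, single_one_vecMul]
    exact hY
  one_mem' := by ext j; simp [one_apply, Pi.single_apply, eq_comm]

end Matrix

lemma Submonoid.mem_of_eq_mul_pow_mul_pow {M : Type*} [Monoid M] {S : Submonoid M} {x y : M}
    (hx : x ∈ S) (hy : y ∈ S) {P : ℕ → M} {a b : ℕ → ℕ} (hP0 : P 0 = 1)
    (hP : ∀ i, P (i + 1) = P i * x ^ a i * y ^ b i) (i : ℕ) : P i ∈ S := by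
  induction i with
  | zero => exact hP0 ▸ S.one_mem
  | succ i ih => exact hP i ▸ S.mul_mem (S.mul_mem ih (S.pow_mem hx _)) (S.pow_mem hy _)

lemma Nat.fib_add_two_le_two_mul (n : ℕ) : fib (n + 2) ≤ 2 * fib (n + 1) := by
  rw [fib_add_two]
  linarith [fib_le_fib_succ (n := n)]

namespace AlternatingProduct

def A : Matrix (Fin 3) (Fin 3) ℝ := !![1,1,1;0,1,0;1,1,0]
def B : Matrix (Fin 3) (Fin 3) ℝ := !![0,1,0;0,1,0;1,1,1]

lemma A_mem_nonnegSubmonoid : A ∈ nonnegSubmonoid (Fin 3) ℝ := by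
  intro i j; fin_cases i <;> fin_cases j <;> norm_num [A]

lemma B_mem_nonnegSubmonoid : B ∈ nonnegSubmonoid (Fin 3) ℝ := by
  intro i j; fin_cases i <;> fin_cases j <;> norm_num [B]

lemma A_mem_rowFixingSubmonoid : A ∈ rowFixingSubmonoid 1 := by
  ext j; fin_cases j <;> rfl

lemma B_mem_rowFixingSubmonoid : B ∈ rowFixingSubmonoid 1 := by
  ext j; fin_cases j <;> rfl

lemma A_pow_apply_zero (a : ℕ) : (A ^ a) 0 0 = Nat.fib (a + 1) ∧ (A ^ a) 0 2 = Nat.fib a := by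
  induction a with
  | zero => simp
  | succ a ih =>
    rw [pow_succ, mul_apply, mul_apply, Fin.sum_univ_three, Fin.sum_univ_three, ih.1, ih.2]
    simp [A, Nat.fib_add_two]
    ring

lemma B_pow_succ_apply_two (b : ℕ) : (B ^ (b + 1)) 2 = ![1, 2 * (b : ℝ) + 1, 1] := by
  induction b with
  | zero => ext j; fin_cases j <;> simp [B]
  | succ b ih =>
    ext j
    rw [pow_succ, mul_apply_eq_vecMul, ih]
    fin_cases j <;> simp [vecMul, dotProduct, Fin.sum_univ_three, B]
    ring

lemma one_le_B_pow_apply_two {b : ℕ} (hb : 1 ≤ b) {j : Fin 3} (hj : j ≠ 2) : 1 ≤ (B ^ b) 2 j := by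
  obtain ⟨b, rfl⟩ := Nat.exists_eq_add_of_le' hb
  rw [B_pow_succ_apply_two]
  fin_cases j <;> simp at hj ⊢

lemma fib_le_A_pow_mul_B_pow_apply (a : ℕ) {b : ℕ} (hb : 1 ≤ b) {j : Fin 3} (hj : j ≠ 2) :
    (Nat.fib a : ℝ) ≤ (A ^ a * B ^ b) 0 j := calc
  (Nat.fib a : ℝ) ≤ (A ^ a) 0 2 * (B ^ b) 2 j := by
    rw [(A_pow_apply_zero a).2]
    exact le_mul_of_one_le_right (Nat.cast_nonneg _) (one_le_B_pow_apply_two hb hj)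
  _ ≤ _ := apply_mul_apply_le_mul_apply (pow_mem A_mem_nonnegSubmonoid a)
    (pow_mem B_mem_nonnegSubmonoid b) 0 2 j

lemma apply_add_apply_add_apply_le_sum {X : Matrix (Fin 3) (Fin 3) ℝ}
    (hX : X ∈ nonnegSubmonoid (Fin 3) ℝ) : X 0 0 + X 0 1 + X 1 1 ≤ ∑ i, ∑ j, X i j := by
  simp only [Fin.sum_univ_three]
  linarith [hX 0 2, hX 1 0, hX 1 2, hX 2 0, hX 2 1, hX 2 2]

lemma mul_fib_le_mul_A_pow_mul_B_pow_apply {X : Matrix (Fin 3) (Fin 3) ℝ}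
    (hX : X ∈ nonnegSubmonoid (Fin 3) ℝ) {c : ℝ} (hc : c ≤ X 0 0) (a : ℕ) {b : ℕ} (hb : 1 ≤ b)
    {j : Fin 3} (hj : j ≠ 2) : c * Nat.fib a ≤ (X * A ^ a * B ^ b) 0 j := calc
  c * Nat.fib a ≤ X 0 0 * (A ^ a * B ^ b) 0 j :=
    mul_le_mul hc (fib_le_A_pow_mul_B_pow_apply a hb hj) (Nat.cast_nonneg _) (hX 0 0)
  _ ≤ _ := by
    rw [mul_assoc]
    exact apply_mul_apply_le_mul_apply hX (mul_mem (pow_mem A_mem_nonnegSubmonoid a)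
      (pow_mem B_mem_nonnegSubmonoid b)) 0 0 j

variable {P : ℕ → Matrix (Fin 3) (Fin 3) ℝ} {a b : ℕ → ℕ}

lemma prod_fib_le_apply_zero_zero (hP0 : P 0 = 1) (hP : ∀ i, P (i + 1) = P i * A ^ a i * B ^ b i)
    (hb : ∀ i, 1 ≤ b i) (i : ℕ) : ∏ j ∈ range i, (Nat.fib (a j) : ℝ) ≤ P i 0 0 := by
  induction i with
  | zero => simp [hP0]
  | succ i ih =>
    rw [prod_range_succ, hP]
    exact mul_fib_le_mul_A_pow_mul_B_pow_apply
      (Submonoid.mem_of_eq_mul_pow_mul_pow A_mem_nonnegSubmonoid B_mem_nonnegSubmonoid hP0 hP i)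
      ih _ (hb i) (by decide)

lemma two_mul_prod_fib_lt_sum (hP0 : P 0 = 1) (hP : ∀ i, P (i + 1) = P i * A ^ a i * B ^ b i)
    (hb : ∀ i, 1 ≤ b i) (t : ℕ) :
    2 * ∏ j ∈ range (t + 1), (Nat.fib (a j) : ℝ) < ∑ i, ∑ j, P (t + 1) i j := by
  have hnonneg (i : ℕ) : P i ∈ nonnegSubmonoid (Fin 3) ℝ :=
    Submonoid.mem_of_eq_mul_pow_mul_pow A_mem_nonnegSubmonoid B_mem_nonnegSubmonoid hP0 hP i
  have hrow : P (t + 1) 1 = Pi.single 1 1 :=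
    Submonoid.mem_of_eq_mul_pow_mul_pow A_mem_rowFixingSubmonoid B_mem_rowFixingSubmonoid hP0 hP
      (t + 1)
  have hle (j : Fin 3) (hj : j ≠ 2) :
      ∏ k ∈ range (t + 1), (Nat.fib (a k) : ℝ) ≤ P (t + 1) 0 j := by
    rw [prod_range_succ, hP]
    exact mul_fib_le_mul_A_pow_mul_B_pow_apply (hnonneg t)
      (prod_fib_le_apply_zero_zero hP0 hP hb t) _ (hb t) hj
  have h11 : P (t + 1) 1 1 = 1 := by simp [hrow]
  linarith [hle 0 (by decide), hle 1 (by decide),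
    apply_add_apply_add_apply_le_sum (hnonneg (t + 1))]

end AlternatingProduct

open goldenRatio in
lemma Real.five_rpow_neg_half_mul_prod_goldenRatio_pow_sub_goldenConj_pow (f : ℕ → ℕ) (t : ℕ) :
    (5 : ℝ) ^ (-(t : ℝ) / 2) * ∏ i ∈ range t, (φ ^ f i - ψ ^ f i) =
      ∏ i ∈ range t, (Nat.fib (f i) : ℝ) := by
  have h5 : (5 : ℝ) ^ (-(t : ℝ) / 2) = (√5 ^ t)⁻¹ := by
    rw [sqrt_eq_rpow, ← rpow_natCast, ← rpow_mul (by norm_num), ← rpow_neg (by norm_num)]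
    ring_nf
  simp_rw [h5, coe_fib_eq, prod_div_distrib, prod_const, card_range]
  field_simp

lemma prod_fib_le_two_mul_prod_fib {s : ℕ → ℕ} (hs1 : 2 ≤ s 1) (t : ℕ) :
    ∏ i ∈ range (t + 1), (Nat.fib (s (2 * i + 1)) : ℝ) ≤
      2 * ∏ i ∈ range (t + 1), (Nat.fib (if i = 0 then s 1 - 1 else s (2 * i + 1)) : ℝ) := by
  obtain ⟨n, hn⟩ := Nat.exists_eq_add_of_le' hs1
  simp_rw [prod_range_succ', if_neg (Nat.succ_ne_zero _), if_pos, hn, mul_comm (2 : ℝ), mul_assoc]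
  gcongr
  rw [show n + 2 - 1 = n + 1 by rfl, mul_comm]
  exact_mod_cast Nat.fib_add_two_le_two_mul n

/-- Lower bound of Theorem 3: the sum of all entries of
`M₁^(s₁-1) M₂^(s₂) M₁^(s₃) M₂^(s₄) ⋯ M₁^(s_{2t-1}) M₂^(s_{2t})` is strictly
greater than `5^(-t/2) ∏_{i=1}^t (μ^(s_{2i-1}) - (1-μ)^(s_{2i-1}))`,
where `μ = (1+√5)/2`. -/
theorem alternating_product_lower_bound (M₁ M₂ : Matrix (Fin 3) (Fin 3) ℝ)
    (hM₁ : M₁ = !![1,1,1;0,1,0;1,1,0]) (hM₂ : M₂ = !![0,1,0;0,1,0;1,1,1])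
    (s : ℕ → ℕ) (hs : ∀ i, 1 ≤ s i) (hs1 : 2 ≤ s 1)
    (μ : ℝ) (hμ : μ = (1 + Real.sqrt 5) / 2)
    (P : ℕ → Matrix (Fin 3) (Fin 3) ℝ) (hP0 : P 0 = 1)
    (hP : ∀ i, P (i + 1) =
      P i * M₁ ^ (if i = 0 then s 1 - 1 else s (2 * i + 1)) * M₂ ^ (s (2 * i + 2)))
    (t : ℕ) (ht : 1 ≤ t) :
    (5 : ℝ) ^ (-(t : ℝ) / 2) *
        ∏ i ∈ Finset.range t, (μ ^ s (2 * i + 1) - (1 - μ) ^ s (2 * i + 1)) <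
      ∑ i, ∑ j, (P t) i j := by
  obtain rfl : M₁ = AlternatingProduct.A := hM₁
  obtain rfl : M₂ = AlternatingProduct.B := hM₂
  obtain rfl : μ = Real.goldenRatio := hμ
  obtain ⟨t, rfl⟩ := Nat.exists_eq_add_of_le' ht
  rw [Real.one_sub_goldenConj, Real.five_rpow_neg_half_mul_prod_goldenRatio_pow_sub_goldenConj_pow]
  exact (prod_fib_le_two_mul_prod_fib hs1 t).trans_lt
    (AlternatingProduct.two_mul_prod_fib_lt_sum hP0 hP (fun i => hs _) t)
end

section
/- Let M_1 = [[1,1,1],[0,1,0],[1,1,0]], M_2 = [[0,1,0],[0,1,0],[1,1,1]], and let s_1,...,s_{2t} be positive integers with s_1 ≥ 2. Then the sum of all entries of M_1^{s_1-1} M_2^{s_2} ⋯ M_1^{s_{2t-1}} M_2^{s_{2t}} is strictly less than ω_1^{s_1+s_3+⋯+s_{2t-1}} · (1 + 2 Σ_{i=1}^t s_{2i}), where ω_1^m denotes the sum of all entries of M_1^{m-1}. -/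
/-!
Work with the row vector `v = 𝟙ᵀ P` of column sums. The invariant is `v ≤ w + c w₀ e₁` entrywise,
where `w = 𝟙ᵀ M₁^(s₁+s₃+⋯-1)` and `c = 2 ∑ s_{2i}`: since `e₁ M₁ = e₁`, the excess in coordinate 1
passes through the factors `M₁` unchanged (and `w₀` only grows), while
`v ↦ v M₂ = (v₂, v₀ + v₁ + v₂, v₂)` raises it by at most `2 w₀` because `w₂ ≤ w₀`.
Summing, `∑ v ≤ ω + c w₀ ≤ ω + c (ω - 1) < ω (1 + c)`, as `w₁ ≥ 1`.
-/

open Matrix Finset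

namespace AlternatingProduct

def M₁ : Matrix (Fin 3) (Fin 3) ℤ := !![1,1,1;0,1,0;1,1,0]

def M₂ : Matrix (Fin 3) (Fin 3) ℤ := !![0,1,0;0,1,0;1,1,1]

lemma vecMul_M₁ (v : Fin 3 → ℤ) : v ᵥ* M₁ = ![v 0 + v 2, v 0 + v 1 + v 2, v 0] := by
  ext j
  fin_cases j <;> simp [M₁, vecMul, dotProduct, Fin.sum_univ_three]

lemma vecMul_M₂ (v : Fin 3 → ℤ) : v ᵥ* M₂ = ![v 2, v 0 + v 1 + v 2, v 2] := by
  ext j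
  fin_cases j <;> simp [M₂, vecMul, dotProduct, Fin.sum_univ_three]

lemma sum_vecMul_one (A : Matrix (Fin 3) (Fin 3) ℤ) : ∑ j, (1 ᵥ* A) j = ∑ i, ∑ j, A i j := by
  simp only [vecMul, dotProduct, Pi.one_apply, one_mul]
  exact Finset.sum_comm

section PowersOfM₁

variable {x : Fin 3 → ℤ}

lemma vecMul_M₁_pow_nonneg (hx : 0 ≤ x) (m : ℕ) : 0 ≤ x ᵥ* M₁ ^ m := by
  induction m with
  | zero => simpa using hx
  | succ m ih =>
    have h₀ : 0 ≤ (x ᵥ* M₁ ^ m) 0 := ih 0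
    have h₁ : 0 ≤ (x ᵥ* M₁ ^ m) 1 := ih 1
    have h₂ : 0 ≤ (x ᵥ* M₁ ^ m) 2 := ih 2
    rw [pow_succ, ← vecMul_vecMul, vecMul_M₁]
    intro j
    fin_cases j <;> simp <;> linarith

lemma le_vecMul_M₁_pow_one (hx : 0 ≤ x) (m : ℕ) : x 1 ≤ (x ᵥ* M₁ ^ m) 1 := by
  induction m with
  | zero => simp
  | succ m ih =>
    have h₀ : 0 ≤ (x ᵥ* M₁ ^ m) 0 := vecMul_M₁_pow_nonneg hx m 0
    have h₂ : 0 ≤ (x ᵥ* M₁ ^ m) 2 := vecMul_M₁_pow_nonneg hx m 2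
    rw [pow_succ, ← vecMul_vecMul, vecMul_M₁]
    simp only [Matrix.cons_val_one, Matrix.cons_val_zero]
    linarith

lemma vecMul_M₁_pow_two_le_zero (hx : 0 ≤ x) (hx₂₀ : x 2 ≤ x 0) (m : ℕ) :
    (x ᵥ* M₁ ^ m) 2 ≤ (x ᵥ* M₁ ^ m) 0 := by
  cases m with
  | zero => simpa using hx₂₀
  | succ m =>
    have h₂ : 0 ≤ (x ᵥ* M₁ ^ m) 2 := vecMul_M₁_pow_nonneg hx m 2
    rw [pow_succ, ← vecMul_vecMul, vecMul_M₁]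
    simp only [Matrix.cons_val_two, Matrix.cons_val_zero, Matrix.tail_cons, Matrix.head_cons]
    linarith

end PowersOfM₁

def Dominated (v w : Fin 3 → ℤ) (c : ℤ) : Prop :=
  v 0 ≤ w 0 ∧ v 1 ≤ w 1 + c * w 0 ∧ v 2 ≤ w 2

namespace Dominated

variable {v w : Fin 3 → ℤ} {c : ℤ}

lemma vecMul_M₁ (h : Dominated v w c) (hw₂ : 0 ≤ w 2) (hc : 0 ≤ c) :
    Dominated (v ᵥ* M₁) (w ᵥ* M₁) c := by
  obtain ⟨h₀, h₁, h₂⟩ := h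
  have := mul_nonneg hc hw₂
  simp only [Dominated, AlternatingProduct.vecMul_M₁, Matrix.cons_val_zero, Matrix.cons_val_one,
    Matrix.cons_val_two, Matrix.tail_cons, Matrix.head_cons]
  refine ⟨?_, ?_, ?_⟩ <;> linarith

lemma vecMul_M₁_pow (h : Dominated v w c) (hw : 0 ≤ w) (hc : 0 ≤ c) (m : ℕ) :
    Dominated (v ᵥ* M₁ ^ m) (w ᵥ* M₁ ^ m) c := by
  induction m with
  | zero => simpa using h
  | succ m ih =>
    rw [pow_succ, ← vecMul_vecMul, ← vecMul_vecMul]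
    exact ih.vecMul_M₁ (vecMul_M₁_pow_nonneg hw m 2) hc

lemma vecMul_M₂ (h : Dominated v w c) (hw : w 2 ≤ w 0) : Dominated (v ᵥ* M₂) w (c + 2) := by
  obtain ⟨h₀, h₁, h₂⟩ := h
  simp only [Dominated, AlternatingProduct.vecMul_M₂, Matrix.cons_val_zero, Matrix.cons_val_one,
    Matrix.cons_val_two, Matrix.tail_cons, Matrix.head_cons]
  refine ⟨?_, ?_, ?_⟩ <;> linarith

lemma vecMul_M₂_pow (h : Dominated v w c) (hw : w 2 ≤ w 0) (r : ℕ) :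
    Dominated (v ᵥ* M₂ ^ r) w (c + 2 * r) := by
  induction r with
  | zero => simpa using h
  | succ r ih =>
    rw [pow_succ, ← vecMul_vecMul]
    convert ih.vecMul_M₂ hw using 1
    push_cast
    ring

lemma sum_lt (h : Dominated v w c) (hw : 0 ≤ w) (hw₁ : 1 ≤ w 1) (hc : 0 < c) :
    ∑ j, v j < (∑ j, w j) * (1 + c) := by
  obtain ⟨h₀, h₁, h₂⟩ := h
  have hw₂ : 0 ≤ w 2 := hw 2
  have hw₀ : w 0 ≤ ∑ j, w j - 1 := by
    rw [Fin.sum_univ_three]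
    linarith
  calc ∑ j, v j ≤ ∑ j, w j + c * w 0 := by
        simp only [Fin.sum_univ_three]
        linarith
    _ ≤ ∑ j, w j + c * (∑ j, w j - 1) := by gcongr
    _ < (∑ j, w j) * (1 + c) := by linarith

end Dominated

lemma dominated_of_recurrence (P : ℕ → Matrix (Fin 3) (Fin 3) ℤ) (a b : ℕ → ℕ)
    (hP0 : P 0 = 1) (hP : ∀ i, P (i + 1) = P i * M₁ ^ a i * M₂ ^ b i) (u : ℕ) :
    Dominated (1 ᵥ* P u) (1 ᵥ* M₁ ^ ∑ i ∈ range u, a i) (2 * ∑ i ∈ range u, (b i : ℤ)) := by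
  have h1 : (0 : Fin 3 → ℤ) ≤ 1 := zero_le_one
  induction u with
  | zero => simp [hP0, Dominated]
  | succ u ih =>
    have hc : 0 ≤ 2 * ∑ i ∈ range u, (b i : ℤ) := by positivity
    have hw := vecMul_M₁_pow_nonneg h1 (∑ i ∈ range u, a i)
    have hw₂₀ := vecMul_M₁_pow_two_le_zero hw (vecMul_M₁_pow_two_le_zero h1 le_rfl _) (a u)
    rw [hP, sum_range_succ, sum_range_succ, mul_add, pow_add]
    simp only [← vecMul_vecMul]
    exact (ih.vecMul_M₁_pow hw hc (a u)).vecMul_M₂_pow hw₂₀ (b u)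

end AlternatingProduct

theorem alternating_product_upper_bound_general (M₁ M₂ : Matrix (Fin 3) (Fin 3) ℤ)
    (hM₁ : M₁ = !![1,1,1;0,1,0;1,1,0]) (hM₂ : M₂ = !![0,1,0;0,1,0;1,1,1])
    (s : ℕ → ℕ) (hs : ∀ i, 1 ≤ s i)
    (ω₁ : ℕ → ℤ) (hω₁ : ∀ m, ω₁ m = ∑ i, ∑ j, (M₁ ^ (m - 1)) i j)
    (P : ℕ → Matrix (Fin 3) (Fin 3) ℤ) (hP0 : P 0 = 1)
    (hP : ∀ i, P (i + 1) =
      P i * M₁ ^ (if i = 0 then s 1 - 1 else s (2 * i + 1)) * M₂ ^ (s (2 * i + 2)))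
    (t : ℕ) (ht : 1 ≤ t) :
    ∑ i, ∑ j, (P t) i j <
      ω₁ (∑ i ∈ Finset.range t, s (2 * i + 1)) *
        (1 + 2 * ∑ i ∈ Finset.range t, (s (2 * i + 2) : ℤ)) := by
  open AlternatingProduct in
  obtain rfl : M₁ = AlternatingProduct.M₁ := hM₁
  obtain rfl : M₂ = AlternatingProduct.M₂ := hM₂
  have hexp : ∑ i ∈ range t, (if i = 0 then s 1 - 1 else s (2 * i + 1)) =
      ∑ i ∈ range t, s (2 * i + 1) - 1 := by
    obtain ⟨t, rfl⟩ := Nat.exists_eq_add_of_le' ht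
    simp only [sum_range_succ', Nat.add_one_ne_zero, if_false, if_true, mul_zero, zero_add]
    have := hs 1
    omega
  have hc : 0 < 2 * ∑ i ∈ range t, (s (2 * i + 2) : ℤ) := by
    have := sum_pos (fun i _ => Int.natCast_pos.mpr (hs (2 * i + 2))) ⟨0, mem_range.mpr ht⟩
    linarith
  have h1 : (0 : Fin 3 → ℤ) ≤ 1 := zero_le_one
  rw [hω₁, ← hexp, ← sum_vecMul_one, ← sum_vecMul_one]
  exact (dominated_of_recurrence P _ _ hP0 hP t).sum_lt (vecMul_M₁_pow_nonneg h1 _)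
    (le_vecMul_M₁_pow_one h1 _) hc

/-- Upper bound of Theorem 3: the sum of all entries of
`M₁^(s₁-1) M₂^(s₂) ⋯ M₁^(s_{2t-1}) M₂^(s_{2t})` is strictly less than
`ω₁^(s₁+s₃+⋯+s_{2t-1}) (1 + 2 ∑_{i=1}^t s_{2i})`, where `ω₁^m` is the sum of
all entries of `M₁^(m-1)`. -/
theorem alternating_product_upper_bound (M₁ M₂ : Matrix (Fin 3) (Fin 3) ℤ)
    (hM₁ : M₁ = !![1,1,1;0,1,0;1,1,0]) (hM₂ : M₂ = !![0,1,0;0,1,0;1,1,1])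
    (s : ℕ → ℕ) (hs : ∀ i, 1 ≤ s i) (hs1 : 2 ≤ s 1)
    (ω₁ : ℕ → ℤ) (hω₁ : ∀ m, ω₁ m = ∑ i, ∑ j, (M₁ ^ (m - 1)) i j)
    (P : ℕ → Matrix (Fin 3) (Fin 3) ℤ) (hP0 : P 0 = 1)
    (hP : ∀ i, P (i + 1) =
      P i * M₁ ^ (if i = 0 then s 1 - 1 else s (2 * i + 1)) * M₂ ^ (s (2 * i + 2)))
    (t : ℕ) (ht : 1 ≤ t) :
    ∑ i, ∑ j, (P t) i j <
      ω₁ (∑ i ∈ Finset.range t, s (2 * i + 1)) *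
        (1 + 2 * ∑ i ∈ Finset.range t, (s (2 * i + 2) : ℤ)) :=
  alternating_product_upper_bound_general M₁ M₂ hM₁ hM₂ s hs ω₁ hω₁ P hP0 hP t ht
end

section
/- Let J be the 3×3 all-ones matrix and M_2 = [[0,1,0],[0,1,0],[1,1,1]]. Let s_1,...,s_{2t} be positive integers with s_1 ≥ 2. Then 3^{s_1+s_3+⋯+s_{2t-1}} < Σ_{i,j} (J^{s_1-1} M_2^{s_2} J^{s_3} M_2^{s_4} ⋯ J^{s_{2t-1}} M_2^{s_{2t}})_{ij} < 3^{s_1+s_3+⋯+s_{2t-1}} · ∏_{i=1}^t (2 s_{2i} + 1). -/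
/-!
Since `J = 𝟙 𝟙ᵀ`, the entry sum is multiplicative across a factor `J`:
`Σ (A J B) = (Σ A)(Σ B)`, and `Σ (A Jᵃ) = 3ᵃ Σ A`. Since `𝟙ᵀ M₂ᵇ = (1, 2b+1, 1)`, we get
`Σ M₂ᵇ = 2b+3`. Hence `3ᵗ Σ P_t = 3^(s₁+s₃+⋯+s_{2t-1}) ∏ᵢ (2 s_{2i} + 3)`, and both bounds
follow factorwise from `3 < 2s + 3 < 3(2s + 1)` for `s ≥ 1`.
-/

open Matrix Finset

section

variable {R : Type*} [CommSemiring R] {l m n p : Type*}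
  [Fintype l] [Fintype m] [Fintype n] [Fintype p]

def entrySum (A : Matrix m n R) : R := ∑ i, ∑ j, A i j

theorem entrySum_eq_sum_ones_vecMul (A : Matrix m n R) :
    entrySum A = ∑ j, ((fun _ => 1) ᵥ* A) j := by
  simp only [entrySum, vecMul, dotProduct, one_mul]
  exact Finset.sum_comm

theorem entrySum_mul_ones_mul (A : Matrix l m R) (B : Matrix n p R) :
    entrySum (A * (of fun _ _ => 1 : Matrix m n R) * B) = entrySum A * entrySum B := by
  have entry : ∀ i k, (A * (of fun _ _ => 1 : Matrix m n R) * B) i k =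
      (∑ j, A i j) * ∑ x, B x k := by
    intro i k
    simp only [mul_apply, of_apply, mul_one, Finset.sum_mul, Finset.mul_sum]
  simp only [entrySum, entry, ← Finset.mul_sum, ← Finset.sum_mul]
  rw [Finset.sum_comm (f := fun k x => B x k)]

theorem entrySum_one [DecidableEq n] : entrySum (1 : Matrix n n R) = Fintype.card n := by
  simp [entrySum, one_apply]

theorem entrySum_mul_ones_pow [DecidableEq n] (A : Matrix m n R) (a : ℕ) :
    entrySum (A * (of fun _ _ => 1 : Matrix n n R) ^ a) =
      (Fintype.card n : R) ^ a * entrySum A := by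
  induction a with
  | zero => simp
  | succ a ih =>
    rw [pow_succ, ← Matrix.mul_assoc, ← Matrix.mul_one (_ * _), entrySum_mul_ones_mul, ih,
      entrySum_one, pow_succ]
    ring

theorem entrySum_mul_ones_pow_mul [DecidableEq n] (A : Matrix m n R) (B : Matrix n p R) {a : ℕ}
    (ha : 1 ≤ a) :
    entrySum (A * (of fun _ _ => 1 : Matrix n n R) ^ a * B) =
      (Fintype.card n : R) ^ (a - 1) * entrySum A * entrySum B := by
  obtain ⟨a, rfl⟩ := Nat.exists_eq_add_of_le' ha
  rw [pow_succ, ← Matrix.mul_assoc, entrySum_mul_ones_mul, entrySum_mul_ones_pow,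
    Nat.add_sub_cancel]

theorem card_pow_mul_entrySum_of_mul_ones_pow_mul [DecidableEq n] (P B : ℕ → Matrix n n R)
    (a : ℕ → ℕ) (ha : ∀ i, 1 ≤ a i)
    (hP : ∀ i, P (i + 1) = P i * (of fun _ _ => 1 : Matrix n n R) ^ a i * B i) (N : ℕ) :
    (Fintype.card n : R) ^ N * entrySum (P N) =
      entrySum (P 0) * (Fintype.card n : R) ^ (∑ i ∈ range N, a i) *
        ∏ i ∈ range N, entrySum (B i) := by
  induction N with
  | zero => simp
  | succ N ih =>
    obtain ⟨b, hb⟩ := Nat.exists_eq_add_of_le' (ha N)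
    rw [hP, entrySum_mul_ones_pow_mul _ _ (ha N), sum_range_succ, prod_range_succ, hb,
      Nat.add_sub_cancel]
    set k := (Fintype.card n : R)
    calc k ^ (N + 1) * (k ^ b * entrySum (P N) * entrySum (B N))
        = k ^ N * entrySum (P N) * (k ^ (b + 1) * entrySum (B N)) := by ring
      _ = _ := by rw [ih]; ring

theorem ones_vecMul_M₂_pow (b : ℕ) :
    (fun _ => 1) ᵥ* (!![0, 1, 0; 0, 1, 0; 1, 1, 1] : Matrix (Fin 3) (Fin 3) R) ^ b =
      ![1, 2 * (b : R) + 1, 1] := by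
  induction b with
  | zero => ext i; fin_cases i <;> simp
  | succ b ih =>
    rw [pow_succ, ← vecMul_vecMul, ih]
    ext j
    fin_cases j <;> simp [vecMul, dotProduct, Fin.sum_univ_three]
    ring

theorem entrySum_M₂_pow (b : ℕ) :
    entrySum ((!![0, 1, 0; 0, 1, 0; 1, 1, 1] : Matrix (Fin 3) (Fin 3) R) ^ b) = 2 * b + 3 := by
  rw [entrySum_eq_sum_ones_vecMul, ones_vecMul_M₂_pow, Fin.sum_univ_three]
  simp only [Nat.succ_eq_add_one, Nat.reduceAdd, Fin.isValue, cons_val_zero, cons_val_one,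
    Matrix.cons_val]
  ring

end

theorem three_pow_card_lt_prod_lt {ι : Type*} (S : Finset ι) (hS : S.Nonempty) (b : ι → ℕ)
    (hb : ∀ i ∈ S, 1 ≤ b i) :
    3 ^ #S < ∏ i ∈ S, (2 * (b i : ℤ) + 3) ∧
      ∏ i ∈ S, (2 * (b i : ℤ) + 3) < 3 ^ #S * ∏ i ∈ S, (2 * (b i : ℤ) + 1) := by
  constructor
  · rw [← prod_const]
    exact prod_lt_prod_of_nonempty (fun _ _ => by norm_num)
      (fun i hi => by have := hb i hi; omega) hS
  · rw [← prod_const, ← prod_mul_distrib]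
    exact prod_lt_prod_of_nonempty (fun _ _ => by positivity)
      (fun i hi => by have := hb i hi; omega) hS

/-- Theorem 4 of the paper: for the alternating product of the all-ones matrix
`J` and `M₂` with durations `s₁,…,s_{2t}`,
`3^(s₁+s₃+⋯+s_{2t-1}) < ∑ entries < 3^(s₁+s₃+⋯+s_{2t-1}) ∏_{i=1}^t (2 s_{2i}+1)`. -/
theorem alternating_ones_M2_bounds (J M₂ : Matrix (Fin 3) (Fin 3) ℤ)
    (hJ : J = Matrix.of fun _ _ => (1 : ℤ)) (hM₂ : M₂ = !![0,1,0;0,1,0;1,1,1])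
    (s : ℕ → ℕ) (hs : ∀ i, 1 ≤ s i) (hs1 : 2 ≤ s 1)
    (P : ℕ → Matrix (Fin 3) (Fin 3) ℤ) (hP0 : P 0 = 1)
    (hP : ∀ i, P (i + 1) =
      P i * J ^ (if i = 0 then s 1 - 1 else s (2 * i + 1)) * M₂ ^ (s (2 * i + 2)))
    (t : ℕ) (ht : 1 ≤ t) :
    (3 : ℤ) ^ (∑ i ∈ Finset.range t, s (2 * i + 1)) < ∑ i, ∑ j, (P t) i j ∧
    ∑ i, ∑ j, (P t) i j <
      (3 : ℤ) ^ (∑ i ∈ Finset.range t, s (2 * i + 1)) *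
        ∏ i ∈ Finset.range t, (2 * (s (2 * i + 2) : ℤ) + 1) := by
  subst hJ hM₂
  have ha : ∀ i, 1 ≤ if i = 0 then s 1 - 1 else s (2 * i + 1) := by
    intro i; split_ifs <;> grind
  have hclosed := card_pow_mul_entrySum_of_mul_ones_pow_mul P _ _ ha hP t
  simp only [hP0, entrySum_one, entrySum_M₂_pow, Fintype.card_fin, Nat.cast_ofNat] at hclosed
  obtain ⟨t, rfl⟩ := Nat.exists_eq_add_of_le' ht
  have hexp : 1 + ∑ i ∈ range (t + 1), (if i = 0 then s 1 - 1 else s (2 * i + 1)) =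
      ∑ i ∈ range (t + 1), s (2 * i + 1) := by
    rw [sum_range_succ', sum_range_succ']
    simp only [Nat.add_eq_zero_iff, one_ne_zero, and_false, ↓reduceIte, mul_zero, zero_add]
    omega
  obtain ⟨hlow, hhigh⟩ := three_pow_card_lt_prod_lt (range (t + 1)) nonempty_range_add_one
    (fun i => s (2 * i + 2)) (fun i _ => hs (2 * i + 2))
  rw [card_range] at hlow hhigh
  rw [← hexp, pow_add, pow_one]
  change _ < entrySum _ ∧ entrySum _ < _
  have h3 : (0 : ℤ) < 3 ^ (t + 1) := by positivity
  have hX : (0 : ℤ) < 3 * 3 ^ ∑ i ∈ range (t + 1), (if i = 0 then s 1 - 1 else s (2 * i + 1)) := by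
    positivity
  constructor
  · nlinarith [mul_lt_mul_of_pos_left hlow hX]
  · nlinarith [mul_lt_mul_of_pos_left hhigh hX]
end
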